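/- For every integer n ≥ 5 and all reals a, b, c with b ≥ 1 and c ≥ 1, there exist real polynomials P and Q, each of degree at most n + 1, such that Q(x) ≠ 0 for all x ∈ [−c, c] and sup_{x ∈ [−c,c]} | (a·x + b·|x|) − P(x)/Q(x) | ≤ 3·b·c·exp(−√n). (An explicit witness is the rational function R(x) = a·x + b·c·A_n(x/c).) -/

import Mathlib

/-!
Newman's argument. Write `α = newmanAlpha n`, `ε = exp (-√n) = α ^ n`, `p = N t`, `q = N (-t)`.
Then `t - A_n t = 2 t q / (p + q)` and `A_n` is even, so let `0 ≤ t ≤ 1`.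

If `t ≤ α ^ (n - 1)`, every factor of `q` lies in `[0, t + α ^ i]`, so `0 ≤ q ≤ p` and the
error is at most `t ≤ α ^ (n - 1) = ε / α`.

Otherwise take `k` with `α ^ (k + 1) ≤ t ≤ α ^ k`. Each ratio `|t - α ^ i| / (t + α ^ i)` is
at most `(1 - u) / (1 + u) ≤ exp (-2 u)`, where `u` runs through `α ^ k, …, α ^ 1` for `i ≤ k`
and through `α ^ 1, …, α ^ (n - 1 - k)`, each at least `α ^ i`, for `i > k`.
Hence `|q| ≤ exp (-2 ∑_{0 < i < n} α ^ i) p`, and `∑_{0 < i < n} α ^ i = (α - ε) / (1 - α)`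
is at least `√n / 2` because `(1 - α) √n ≤ 1` and `α - ε ≥ 5/8 - 1/8` for `n ≥ 5`.
So `|q| ≤ ε p` and the error is at most `2 ε / (1 - ε) ≤ 3 ε`.
-/

/-- `newmanAlpha n = exp(-1/√n)`. -/
noncomputable def newmanAlpha (n : ℕ) : ℝ := Real.exp (-1 / Real.sqrt n)

/-- The Newman polynomial `N_n(t) = ∏_{i=1}^{n-1} (t + α_n^i)`. -/
noncomputable def newmanPoly (n : ℕ) (t : ℝ) : ℝ :=
  ∏ i ∈ Finset.Icc 1 (n - 1), (t + (newmanAlpha n) ^ i)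

/-- The Newman approximant `A_n(t) = t (N_n(t) - N_n(-t)) / (N_n(t) + N_n(-t))`. -/
noncomputable def newmanApprox (n : ℕ) (t : ℝ) : ℝ :=
  t * (newmanPoly n t - newmanPoly n (-t)) / (newmanPoly n t + newmanPoly n (-t))

open Finset Real

theorem one_sub_le_one_add_mul_exp_neg_two_mul {u : ℝ} (hu : 0 ≤ u) :
    1 - u ≤ (1 + u) * exp (-2 * u) := by
  rcases le_or_gt 1 u with h1 | h1
  · nlinarith [exp_pos (-2 * u)]
  have h2u : 2 * u ≤ log ((1 + u) / (1 - u)) := by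
    rw [log_div (by linarith) (by linarith)]
    simpa using le_hasSum (hasSum_log_sub_log_of_abs_lt_one (abs_lt.2 ⟨by linarith, h1⟩)) 0
      fun k _ => by positivity
  have h := (le_div_iff₀ (by linarith)).1 ((le_log_iff_exp_le (by positivity)).1 h2u)
  have hexp : exp (2 * u) * exp (-2 * u) = 1 := by rw [← exp_add]; simp
  nlinarith [exp_pos (-2 * u)]

theorem abs_sub_le_exp_mul_add {x y u : ℝ} (hx : 0 ≤ x) (hy : 0 ≤ y) (hu : 0 ≤ u)
    (h : u * max x y ≤ min x y) : |x - y| ≤ exp (-2 * u) * (x + y) := by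
  have key : |x - y| * (1 + u) ≤ (1 - u) * (x + y) := by
    rcases le_total x y with hxy | hxy
    · rw [max_eq_right hxy, min_eq_left hxy] at h
      rw [abs_of_nonpos (by linarith)]
      nlinarith
    · rw [max_eq_left hxy, min_eq_right hxy] at h
      rw [abs_of_nonneg (by linarith)]
      nlinarith
  have := mul_le_mul_of_nonneg_right (one_sub_le_one_add_mul_exp_neg_two_mul hu)
    (add_nonneg hx hy)
  nlinarith

theorem exists_pow_succ_le_le_pow {α t : ℝ} (hα : α ≤ 1) {m : ℕ} (ht : α ^ m ≤ t)
    (ht1 : t ≤ 1) : ∃ k ≤ m, α ^ (k + 1) ≤ t ∧ t ≤ α ^ k := by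
  induction m with
  | zero => exact ⟨0, le_rfl, by simpa using hα.trans (by simpa using ht), by simpa using ht1⟩
  | succ m ih =>
    by_cases h : α ^ m ≤ t
    · obtain ⟨k, hkm, hk⟩ := ih h
      exact ⟨k, by omega, hk⟩
    · exact ⟨m, by omega, ht, (not_le.1 h).le⟩

theorem prod_le_exp_sum_mul {ι : Type*} {s : Finset ι} {f g v : ι → ℝ}
    (hf : ∀ i ∈ s, 0 ≤ f i) (h : ∀ i ∈ s, f i ≤ exp (v i) * g i) :
    ∏ i ∈ s, f i ≤ exp (∑ i ∈ s, v i) * ∏ i ∈ s, g i := by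
  rw [exp_sum, ← prod_mul_distrib]
  exact prod_le_prod hf h

theorem Finset.sum_Ioc_zero_reflect {M : Type*} [AddCommMonoid M] (f : ℕ → M) (k : ℕ) :
    ∑ i ∈ Ioc 0 k, f (k + 1 - i) = ∑ i ∈ Ioc 0 k, f i := by
  rw [← Ico_add_one_add_one_eq_Ioc, sum_Ico_reflect f _ (n := k + 1) (by omega)]
  simp

theorem prod_abs_sub_pow_le {α t : ℝ} (hα0 : 0 < α) (hα1 : α ≤ 1) {m : ℕ} (ht : α ^ m ≤ t)
    (ht1 : t ≤ 1) :
    ∏ i ∈ Ioc 0 m, |t - α ^ i| ≤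
      exp (-2 * ∑ i ∈ Ioc 0 m, α ^ i) * ∏ i ∈ Ioc 0 m, (t + α ^ i) := by
  obtain ⟨k, hkm, hk1, hk⟩ := exists_pow_succ_le_le_pow hα1 ht ht1
  have ht0 : 0 ≤ t := (pow_nonneg hα0.le _).trans hk1
  have hlow : ∏ i ∈ Ioc 0 k, |t - α ^ i| ≤
      exp (∑ i ∈ Ioc 0 k, -2 * α ^ (k + 1 - i)) * ∏ i ∈ Ioc 0 k, (t + α ^ i) := by
    refine prod_le_exp_sum_mul (fun _ _ => abs_nonneg _) fun i hi => ?_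
    have hi := mem_Ioc.1 hi
    refine abs_sub_le_exp_mul_add ht0 (by positivity) (by positivity) ?_
    have hti : t ≤ α ^ i := hk.trans (pow_le_pow_of_le_one hα0.le hα1 hi.2)
    rwa [max_eq_right hti, min_eq_left hti, ← pow_add, Nat.sub_add_cancel (by omega)]
  have hhigh : ∏ i ∈ Ioc k m, |t - α ^ i| ≤
      exp (∑ i ∈ Ioc k m, -2 * α ^ (i - k)) * ∏ i ∈ Ioc k m, (t + α ^ i) := by
    refine prod_le_exp_sum_mul (fun _ _ => abs_nonneg _) fun i hi => ?_
    have hi := mem_Ioc.1 hi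
    refine abs_sub_le_exp_mul_add ht0 (by positivity) (by positivity) ?_
    have hit : α ^ i ≤ t := (pow_le_pow_of_le_one hα0.le hα1 hi.1).trans hk1
    rw [max_eq_left hit, min_eq_right hit]
    calc α ^ (i - k) * t ≤ α ^ (i - k) * α ^ k := by gcongr
      _ = α ^ i := by rw [← pow_add, Nat.sub_add_cancel hi.1.le]
  have hsum : ∑ i ∈ Ioc 0 m, α ^ i ≤
      ∑ i ∈ Ioc 0 k, α ^ (k + 1 - i) + ∑ i ∈ Ioc k m, α ^ (i - k) := by
    rw [← sum_Ioc_consecutive _ k.zero_le hkm, sum_Ioc_zero_reflect (α ^ ·)]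
    exact add_le_add_right
      (sum_le_sum fun i _ => pow_le_pow_of_le_one hα0.le hα1 (Nat.sub_le i k)) _
  rw [← prod_Ioc_consecutive _ k.zero_le hkm, ← prod_Ioc_consecutive _ k.zero_le hkm]
  calc _ ≤ _ := mul_le_mul hlow hhigh (prod_nonneg fun _ _ => abs_nonneg _) (by positivity)
    _ ≤ _ := by
      rw [mul_mul_mul_comm, ← exp_add, ← mul_sum, ← mul_sum, ← mul_add]
      gcongr ?_ * _
      exact exp_le_exp.2 (by linarith)

theorem exp_nine_twentieths_le : exp (9 / 20) ≤ 8 / 5 := by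
  have h := exp_bound' (x := 9 / 20) (by norm_num) (by norm_num) (n := 3) (by norm_num)
  norm_num [sum_range_succ, Nat.factorial] at h
  linarith

theorem eight_le_exp_twenty_ninths : 8 ≤ exp (20 / 9) := by
  have h := sum_le_exp_of_nonneg (x := 20 / 9) (by norm_num) 5
  norm_num [sum_range_succ, Nat.factorial] at h
  linarith

theorem twenty_ninths_le_sqrt {n : ℕ} (hn : 5 ≤ n) : 20 / 9 ≤ √(n : ℝ) := by
  have : (5 : ℝ) ≤ n := by exact_mod_cast hn
  exact le_sqrt_of_sq_le (by linarith)

theorem exp_neg_sqrt_le {n : ℕ} (hn : 5 ≤ n) : exp (-√(n : ℝ)) ≤ 1 / 8 := by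
  rw [exp_neg, inv_eq_one_div]
  gcongr
  exact eight_le_exp_twenty_ninths.trans (exp_le_exp.2 (twenty_ninths_le_sqrt hn))

namespace newmanAlpha

theorem pos (n : ℕ) : 0 < newmanAlpha n := exp_pos _

theorem five_eighths_le {n : ℕ} (hn : 5 ≤ n) : 5 / 8 ≤ newmanAlpha n := by
  have hs := twenty_ninths_le_sqrt hn
  have h : -(9 / 20 : ℝ) ≤ -1 / √(n : ℝ) := by
    rw [neg_div, neg_le_neg_iff, div_le_iff₀ (by linarith)]
    linarith
  calc (5 / 8 : ℝ) ≤ exp (-(9 / 20)) := by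
        rw [exp_neg, ← one_div, le_div_iff₀ (exp_pos _)]; linarith [exp_nine_twentieths_le]
    _ ≤ newmanAlpha n := exp_le_exp.2 h

theorem lt_one {n : ℕ} (hn : 5 ≤ n) : newmanAlpha n < 1 := by
  rw [newmanAlpha, exp_lt_one_iff, neg_div, neg_lt_zero]
  have := twenty_ninths_le_sqrt hn
  positivity

theorem pow_self (n : ℕ) : newmanAlpha n ^ n = exp (-√(n : ℝ)) := by
  rw [newmanAlpha, ← exp_nat_mul, mul_div, mul_neg_one, neg_div, div_sqrt]

theorem one_sub_le (n : ℕ) : 1 - newmanAlpha n ≤ 1 / √(n : ℝ) := by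
  rw [newmanAlpha, neg_div]
  linarith [add_one_le_exp (-(1 / √(n : ℝ)))]

end newmanAlpha

theorem sqrt_le_two_mul_sum_newmanAlpha_pow {n : ℕ} (hn : 5 ≤ n) :
    √(n : ℝ) ≤ 2 * ∑ i ∈ Ioc 0 (n - 1), newmanAlpha n ^ i := by
  set α := newmanAlpha n
  have hs : 0 < √(n : ℝ) := by have := twenty_ninths_le_sqrt hn; positivity
  have hα1 : 0 < 1 - α := sub_pos.2 (newmanAlpha.lt_one hn)
  have hgeom : (∑ i ∈ Ioc 0 (n - 1), α ^ i) * (1 - α) = α - exp (-√(n : ℝ)) := by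
    rw [← Ico_add_one_add_one_eq_Ioc, Nat.sub_add_cancel (by omega),
      geom_sum_Ico_mul_neg _ (by omega), zero_add, pow_one, newmanAlpha.pow_self]
  have hscale : (1 - α) * √(n : ℝ) ≤ 1 := by
    have := mul_le_mul_of_nonneg_right (newmanAlpha.one_sub_le n) hs.le
    rwa [one_div_mul_cancel hs.ne'] at this
  have := newmanAlpha.five_eighths_le hn
  have := exp_neg_sqrt_le hn
  refine le_of_mul_le_mul_left ?_ hα1
  nlinarith

theorem newmanPoly_pos {n : ℕ} {t : ℝ} (ht : 0 ≤ t) : 0 < newmanPoly n t :=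
  prod_pos fun i _ => add_pos_of_nonneg_of_pos ht (pow_pos (newmanAlpha.pos n) i)

theorem abs_newmanPoly_neg_le {n : ℕ} (hn : 5 ≤ n) {t : ℝ} (ht : newmanAlpha n ^ (n - 1) ≤ t)
    (ht1 : t ≤ 1) : |newmanPoly n (-t)| ≤ exp (-√(n : ℝ)) * newmanPoly n t := by
  have hα0 := newmanAlpha.pos n
  have hsum := sqrt_le_two_mul_sum_newmanAlpha_pow hn
  have hprod := prod_abs_sub_pow_le hα0 (newmanAlpha.lt_one hn).le ht ht1
  simp only [newmanPoly, abs_prod, neg_add_eq_sub, abs_sub_comm _ t,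
    show Icc 1 (n - 1) = Ioc 0 (n - 1) from Icc_add_one_left_eq_Ioc 0 _]
  have ht0 : 0 ≤ t := (pow_nonneg hα0.le _).trans ht
  refine hprod.trans ?_
  gcongr
  linarith

theorem sub_newmanApprox {n : ℕ} {t : ℝ} (h : newmanPoly n t + newmanPoly n (-t) ≠ 0) :
    t - newmanApprox n t = 2 * t * newmanPoly n (-t) / (newmanPoly n t + newmanPoly n (-t)) := by
  rw [newmanApprox, eq_div_iff h]
  field_simp
  ring

theorem newmanApprox_neg (n : ℕ) (t : ℝ) : newmanApprox n (-t) = newmanApprox n t := by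
  rw [newmanApprox, newmanApprox, neg_neg, add_comm (newmanPoly n (-t))]
  ring

theorem abs_sub_newmanApprox_le_of_le_pow {n : ℕ} (hn : 5 ≤ n) {t : ℝ} (ht0 : 0 ≤ t)
    (ht : t ≤ newmanAlpha n ^ (n - 1)) :
    0 < newmanPoly n t + newmanPoly n (-t) ∧
      |t - newmanApprox n t| ≤ 3 * exp (-√(n : ℝ)) := by
  set α := newmanAlpha n
  have hp := newmanPoly_pos (n := n) ht0
  have hfac : ∀ i ∈ Icc 1 (n - 1), 0 ≤ -t + α ^ i := fun i hi => by
    linarith [pow_le_pow_of_le_one (newmanAlpha.pos n).le (newmanAlpha.lt_one hn).le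
      (mem_Icc.1 hi).2]
  have hq : 0 ≤ newmanPoly n (-t) := prod_nonneg hfac
  have hqp : newmanPoly n (-t) ≤ newmanPoly n t := prod_le_prod hfac fun i _ => by linarith
  have hD : 0 < newmanPoly n t + newmanPoly n (-t) := by linarith
  refine ⟨hD, ?_⟩
  have hpow : α ^ (n - 1) * α = exp (-√(n : ℝ)) := by
    rw [← pow_succ, Nat.sub_add_cancel (by omega), newmanAlpha.pow_self]
  have := newmanAlpha.five_eighths_le hn
  rw [sub_newmanApprox hD.ne', abs_of_nonneg (by positivity)]
  calc _ ≤ t := by rw [div_le_iff₀ hD]; nlinarith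
    _ ≤ 3 * exp (-√(n : ℝ)) := by nlinarith [pow_pos (newmanAlpha.pos n) (n - 1)]

theorem abs_sub_newmanApprox_le_of_pow_le {n : ℕ} (hn : 5 ≤ n) {t : ℝ}
    (ht : newmanAlpha n ^ (n - 1) ≤ t) (ht1 : t ≤ 1) :
    0 < newmanPoly n t + newmanPoly n (-t) ∧
      |t - newmanApprox n t| ≤ 3 * exp (-√(n : ℝ)) := by
  set ε := exp (-√(n : ℝ))
  have ht0 : 0 ≤ t := (pow_nonneg (newmanAlpha.pos n).le _).trans ht
  have hp := newmanPoly_pos (n := n) ht0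
  have hq := abs_newmanPoly_neg_le hn ht ht1
  have hε : ε ≤ 1 / 8 := exp_neg_sqrt_le hn
  have hD : (1 - ε) * newmanPoly n t ≤ newmanPoly n t + newmanPoly n (-t) := by
    linarith [neg_abs_le (newmanPoly n (-t))]
  have hD0 : 0 < newmanPoly n t + newmanPoly n (-t) := by nlinarith
  refine ⟨hD0, ?_⟩
  rw [sub_newmanApprox hD0.ne', abs_div, abs_of_pos hD0, div_le_iff₀ hD0, abs_mul,
    abs_of_nonneg (by positivity : 0 ≤ 2 * t)]
  nlinarith [exp_pos (-√(n : ℝ)), abs_nonneg (newmanPoly n (-t))]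

theorem abs_abs_sub_newmanApprox_le {n : ℕ} (hn : 5 ≤ n) {t : ℝ} (ht : |t| ≤ 1) :
    0 < newmanPoly n t + newmanPoly n (-t) ∧
      |(|t| - newmanApprox n t)| ≤ 3 * exp (-√(n : ℝ)) := by
  wlog ht0 : 0 ≤ t generalizing t
  · have h := this (t := -t) (by rwa [abs_neg]) (by linarith)
    rwa [abs_neg, newmanApprox_neg, neg_neg, add_comm] at h
  rw [abs_of_nonneg ht0]
  rcases le_total t (newmanAlpha n ^ (n - 1)) with h | h
  · exact abs_sub_newmanApprox_le_of_le_pow hn ht0 h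
  · exact abs_sub_newmanApprox_le_of_pow_le hn h ((le_abs_self t).trans ht)

open Polynomial

noncomputable def scaledNewmanPoly (n : ℕ) (c : ℝ) : ℝ[X] :=
  ∏ i ∈ Icc 1 (n - 1), (X + C (c * newmanAlpha n ^ i))

noncomputable def newmanDenominator (n : ℕ) (c : ℝ) : ℝ[X] :=
  scaledNewmanPoly n c + (scaledNewmanPoly n c).comp (-X)

noncomputable def newmanNumerator (n : ℕ) (a b c : ℝ) : ℝ[X] :=
  X * (C a * newmanDenominator n c +
    C b * (scaledNewmanPoly n c - (scaledNewmanPoly n c).comp (-X)))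

theorem natDegree_scaledNewmanPoly_le (n : ℕ) (c : ℝ) :
    (scaledNewmanPoly n c).natDegree ≤ n - 1 :=
  (natDegree_prod_le _ _).trans <| by
    simp only [natDegree_X_add_C, sum_const, Nat.card_Icc, smul_eq_mul, mul_one, le_refl,
      Nat.add_sub_cancel]

theorem natDegree_scaledNewmanPoly_comp_neg_le (n : ℕ) (c : ℝ) :
    ((scaledNewmanPoly n c).comp (-X)).natDegree ≤ n - 1 := by
  simpa [natDegree_comp] using natDegree_scaledNewmanPoly_le n c

theorem natDegree_newmanDenominator_le (n : ℕ) (c : ℝ) :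
    (newmanDenominator n c).natDegree ≤ n - 1 :=
  natDegree_add_le_of_degree_le (natDegree_scaledNewmanPoly_le n c)
    (natDegree_scaledNewmanPoly_comp_neg_le n c)

theorem natDegree_newmanNumerator_le (n : ℕ) (a b c : ℝ) :
    (newmanNumerator n a b c).natDegree ≤ n - 1 + 1 := by
  have h : (C a * newmanDenominator n c +
      C b * (scaledNewmanPoly n c - (scaledNewmanPoly n c).comp (-X))).natDegree ≤ n - 1 :=
    natDegree_add_le_of_degree_le
      ((natDegree_C_mul_le a _).trans (natDegree_newmanDenominator_le n c))
      ((natDegree_C_mul_le b _).trans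
        ((natDegree_sub_le_of_le (natDegree_scaledNewmanPoly_le n c)
          (natDegree_scaledNewmanPoly_comp_neg_le n c)).trans (max_self _).le))
  exact natDegree_mul_le.trans (by rw [natDegree_X, add_comm]; exact Nat.add_le_add_right h 1)

theorem eval_scaledNewmanPoly {c : ℝ} (hc : c ≠ 0) (n : ℕ) (x : ℝ) :
    (scaledNewmanPoly n c).eval x = c ^ (n - 1) * newmanPoly n (x / c) := by
  have h : ∀ i, x + c * newmanAlpha n ^ i = c * (x / c + newmanAlpha n ^ i) := fun i => by
    field_simp
  simp only [scaledNewmanPoly, eval_prod, eval_add, eval_X, eval_C, h, prod_mul_distrib,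
    prod_const, Nat.card_Icc, Nat.add_sub_cancel, newmanPoly]

theorem eval_newmanDenominator {c : ℝ} (hc : c ≠ 0) (n : ℕ) (x : ℝ) :
    (newmanDenominator n c).eval x =
      c ^ (n - 1) * (newmanPoly n (x / c) + newmanPoly n (-(x / c))) := by
  simp only [newmanDenominator, eval_add, eval_comp, eval_neg, eval_X, eval_scaledNewmanPoly hc,
    neg_div, mul_add]

theorem eval_newmanNumerator_div {c : ℝ} (hc : c ≠ 0) {n : ℕ} {x : ℝ}
    (hD : newmanPoly n (x / c) + newmanPoly n (-(x / c)) ≠ 0) (a b : ℝ) :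
    (newmanNumerator n a b c).eval x / (newmanDenominator n c).eval x =
      a * x + b * c * newmanApprox n (x / c) := by
  simp only [newmanNumerator, eval_mul, eval_add, eval_sub, eval_X, eval_C, eval_comp, eval_neg,
    eval_newmanDenominator hc, eval_scaledNewmanPoly hc, newmanApprox, neg_div]
  field_simp

/-- Theorem 1: rational approximation of `f₁(x) = a·x + b·|x|` on `[-c, c]`
at rate `3·b·c·exp(-√n)`, with numerator and denominator of degree at most `n + 1`. -/
theorem rational_approx_f1 (n : ℕ) (hn : 5 ≤ n) (a b c : ℝ) (hb : 1 ≤ b) (hc : 1 ≤ c) :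
    ∃ P Q : Polynomial ℝ, P.degree ≤ (n : ℕ) + 1 ∧ Q.degree ≤ (n : ℕ) + 1 ∧
      (∀ x ∈ Set.Icc (-c) c, Q.eval x ≠ 0) ∧
      ∀ x ∈ Set.Icc (-c) c,
        |(a * x + b * |x|) - P.eval x / Q.eval x| ≤ 3 * b * c * Real.exp (-Real.sqrt n) := by
  have hc0 : 0 < c := by linarith
  have hdeg {p : ℝ[X]} {d : ℕ} (hp : p.natDegree ≤ d) (hd : d ≤ n + 1) :
      p.degree ≤ (n : ℕ) + 1 := by
    exact_mod_cast degree_le_of_natDegree_le (hp.trans hd)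
  have hnewman {x : ℝ} (hx : x ∈ Set.Icc (-c) c) := abs_abs_sub_newmanApprox_le hn (t := x / c)
    (by rw [abs_div, abs_of_pos hc0, div_le_one hc0]; exact abs_le.2 hx)
  refine ⟨newmanNumerator n a b c, newmanDenominator n c,
    hdeg (natDegree_newmanNumerator_le n a b c) (by omega),
    hdeg (natDegree_newmanDenominator_le n c) (by omega), fun x hx => ?_, fun x hx => ?_⟩
  · rw [eval_newmanDenominator hc0.ne']
    exact mul_ne_zero (pow_ne_zero _ hc0.ne') (hnewman hx).1.ne'
  · have hrescale : a * x + b * |x| - (a * x + b * c * newmanApprox n (x / c)) =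
        b * c * (|x / c| - newmanApprox n (x / c)) := by
      rw [abs_div, abs_of_pos hc0]
      field_simp
      ring
    rw [eval_newmanNumerator_div hc0.ne' (hnewman hx).1.ne', hrescale, abs_mul,
      abs_of_pos (by positivity : 0 < b * c)]
    exact (mul_le_mul_of_nonneg_left (hnewman hx).2 (by positivity)).trans_eq (by ring)
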